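/- Let m : Finset(Fin n) → ℝ_{>0} and 1 ≤ P ≤ n. Then Σ_{p=1}^P (1/C(n,p)) Σ_{|T|=p} (1/p) Σ_{j∈T} [log m(T^c ∪ {j}) − log m(T^c)] = (1/C(n,P)) Σ_{|T|=P} [log m(univ) − log m(T^c)]. -/

import Mathlib

/-!
Write `f T = log m(univ) − log m(Tᶜ)`; the leave-one-out term `log m(Tᶜ ∪ {j}) − log m(Tᶜ)`
is then `f T − f (T \ {j})`. Averaged over `p`-subsets `T` and `j ∈ T`, the subtracted part
double counts the `(p−1)`-subsets `S`, each arising from `n − p + 1` pairs `(T, j)`, and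
`C(n,p)·p = C(n,p−1)·(n−p+1)` turns it into the average of `f` over `(p−1)`-subsets. So the
`p`-th cross-validation term is `avg_p f − avg_{p−1} f`, and the sum telescopes to
`avg_P f − f ∅ = avg_P f`.
-/

open Finset

variable {α : Type*} [Fintype α] [DecidableEq α]

theorem Finset.sum_powersetCard_succ_sum_erase {β : Type*} [AddCommMonoid β] (q : ℕ)
    (g : Finset α → β) :
    ∑ T ∈ powersetCard (q + 1) univ, ∑ j ∈ T, g (T.erase j) =
      (Fintype.card α - q) • ∑ S ∈ powersetCard q (univ : Finset α), g S := by
  have hpairs : ∑ T ∈ powersetCard (q + 1) univ, ∑ j ∈ T, g (T.erase j) =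
      ∑ S ∈ powersetCard q (univ : Finset α), ∑ _j ∈ Sᶜ, g S := by
    rw [sum_sigma', sum_sigma']
    refine sum_nbij' (fun x => ⟨x.1.erase x.2, x.2⟩) (fun y => ⟨insert y.2 y.1, y.2⟩)
      ?_ ?_ ?_ ?_ fun _ _ => rfl
    · rintro ⟨T, j⟩ hx
      simp only [mem_sigma, mem_powersetCard_univ] at hx ⊢
      simp [card_erase_of_mem hx.2, hx.1]
    · rintro ⟨S, j⟩ hy
      simp only [mem_sigma, mem_powersetCard_univ, mem_compl] at hy ⊢
      simp [card_insert_of_notMem hy.2, hy.1]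
    · rintro ⟨T, j⟩ hx
      simp only [mem_sigma] at hx
      simp [insert_erase hx.2]
    · rintro ⟨S, j⟩ hy
      simp only [mem_sigma, mem_compl] at hy
      simp [erase_insert hy.2]
  rw [hpairs, smul_sum]
  refine sum_congr rfl fun S hS => ?_
  rw [sum_const, card_compl, mem_powersetCard_univ.1 hS]

noncomputable def subsetAverage (f : Finset α → ℝ) (p : ℕ) : ℝ :=
  ((Fintype.card α).choose p : ℝ)⁻¹ * ∑ T ∈ powersetCard p univ, f T

omit [DecidableEq α] in
theorem subsetAverage_zero (f : Finset α → ℝ) : subsetAverage f 0 = f ∅ := by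
  simp [subsetAverage]

theorem average_sum_sub_erase_eq_subsetAverage_sub (f : Finset α → ℝ) {q : ℕ}
    (hq : q + 1 ≤ Fintype.card α) :
    ((Fintype.card α).choose (q + 1) : ℝ)⁻¹ * ∑ T ∈ powersetCard (q + 1) univ,
        ((q + 1 : ℕ) : ℝ)⁻¹ * ∑ j ∈ T, (f T - f (T.erase j)) =
      subsetAverage f (q + 1) - subsetAverage f q := by
  have hq1 : ((q + 1 : ℕ) : ℝ) ≠ 0 := by positivity
  have hsplit : ∀ T ∈ powersetCard (q + 1) (univ : Finset α),
      ((q + 1 : ℕ) : ℝ)⁻¹ * ∑ j ∈ T, (f T - f (T.erase j)) =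
        f T - ((q + 1 : ℕ) : ℝ)⁻¹ * ∑ j ∈ T, f (T.erase j) := by
    intro T hT
    rw [sum_sub_distrib, sum_const, mem_powersetCard_univ.1 hT, nsmul_eq_mul, mul_sub,
      inv_mul_cancel_left₀ hq1]
  have hchoose : ((Fintype.card α).choose (q + 1) : ℝ) * ((q + 1 : ℕ) : ℝ) =
      ((Fintype.card α).choose q : ℝ) * ((Fintype.card α - q : ℕ) : ℝ) := by
    exact_mod_cast (Fintype.card α).choose_succ_right_eq q
  have hnq : ((Fintype.card α - q : ℕ) : ℝ) ≠ 0 := by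
    exact_mod_cast (Nat.sub_pos_of_lt hq).ne'
  rw [sum_congr rfl hsplit, sum_sub_distrib, ← mul_sum, sum_powersetCard_succ_sum_erase,
    nsmul_eq_mul, mul_sub, subsetAverage, subsetAverage]
  congr 1
  rw [← mul_assoc, ← mul_assoc, ← mul_inv, hchoose]
  field_simp

theorem sum_Icc_average_sum_sub_erase (f : Finset α → ℝ) {P : ℕ}
    (hP : P ≤ Fintype.card α) :
    ∑ p ∈ Icc 1 P, ((Fintype.card α).choose p : ℝ)⁻¹ * ∑ T ∈ powersetCard p univ,
        (p : ℝ)⁻¹ * ∑ j ∈ T, (f T - f (T.erase j)) =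
      subsetAverage f P - f ∅ := by
  induction P with
  | zero => simp [subsetAverage_zero]
  | succ q ih =>
    rw [sum_Icc_succ_top (Nat.le_add_left 1 q), ih (Nat.le_of_succ_le hP),
      average_sum_sub_erase_eq_subsetAverage_sub f hP]
    ring

theorem stmt12_general (n : ℕ) (m : Finset (Fin n) → ℝ)
    (P : ℕ) (hP2 : P ≤ n) :
    ∑ p ∈ Finset.Icc 1 P, ((n.choose p : ℝ))⁻¹ *
      ∑ T ∈ (Finset.univ : Finset (Fin n)).powersetCard p, (p : ℝ)⁻¹ *
        ∑ j ∈ T, (Real.log (m (Tᶜ ∪ {j})) - Real.log (m Tᶜ)) =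
    ((n.choose P : ℝ))⁻¹ *
      ∑ T ∈ (Finset.univ : Finset (Fin n)).powersetCard P,
        (Real.log (m (Finset.univ : Finset (Fin n))) - Real.log (m Tᶜ)) := by
  set f : Finset (Fin n) → ℝ := fun T => Real.log (m univ) - Real.log (m Tᶜ)
  have hterm : ∀ (T : Finset (Fin n)) (j : Fin n),
      Real.log (m (Tᶜ ∪ {j})) - Real.log (m Tᶜ) = f T - f (T.erase j) := by
    intro T j
    simp only [f, compl_erase, insert_eq, union_comm {j}]
    ring
  simp only [hterm]
  have h := sum_Icc_average_sum_sub_erase f (P := P) (by simpa using hP2)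
  simp only [Fintype.card_fin] at h
  rw [h, subsetAverage, Fintype.card_fin]
  simp [f]

/-- Subset-indexed form of the `S_CCV` corollary: the cumulative cross-validation score
through leave-`P`-out equals the average over `P`-element test sets `T` of the log
conditional probability `log m(univ) − log m(T^c)` of the test set given the training
set. -/
theorem stmt12 (n : ℕ) (m : Finset (Fin n) → ℝ) (hpos : ∀ S, 0 < m S)
    (P : ℕ) (hP1 : 1 ≤ P) (hP2 : P ≤ n) :
    ∑ p ∈ Finset.Icc 1 P, ((n.choose p : ℝ))⁻¹ *
      ∑ T ∈ (Finset.univ : Finset (Fin n)).powersetCard p, (p : ℝ)⁻¹ *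
        ∑ j ∈ T, (Real.log (m (Tᶜ ∪ {j})) - Real.log (m Tᶜ)) =
    ((n.choose P : ℝ))⁻¹ *
      ∑ T ∈ (Finset.univ : Finset (Fin n)).powersetCard P,
        (Real.log (m (Finset.univ : Finset (Fin n))) - Real.log (m Tᶜ)) :=
  stmt12_general n m P hP2
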